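/- arXiv:2205.08407 — 4 statements merged into one kernel-verified Lean document; each statement's English description precedes it below -/
import Mathlib

section
/- For every choice of parameters a, a', s > 0 with T = (a'+s)/(a'+s+a), there exists an instance in which some expert can strictly increase her payoff by switching her vote against the honest winner. Concretely: there are two proposals, expert 1 with weight w_1 = 1, beliefs p_{11} = T, p_{12} = 1, a second expert with weight w_2 ∈ (0,1) who approves only proposal 1, and all external rewards zero; when expert 1 votes honestly (approving both proposals) the winner is proposal 1, but the deviation in which expert 1 keeps her honest votes except changing her vote on proposal 1 from 1 to 0 makes proposal 2 the winner and strictly increases her utility (from a·T − s·(1−T) = a'·(1−T) to a). -/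
open Finset

/-- Total approving weight of proposal `j` under voting profile `r`. -/
def approvalWeight {n k : ℕ} (w : Fin n → ℝ) (r : Fin n → Fin k → Bool) (j : Fin k) : ℝ :=
  ∑ i, if r i j then w i else 0

/-- The winner of the approval-voting mechanism `M_AV`: the proposal of smallest index
maximizing the total approving weight; no proposal is selected when every proposal has zero
total approving weight. -/
noncomputable def winner {n k : ℕ} (w : Fin n → ℝ) (r : Fin n → Fin k → Bool) :
    Option (Fin k) :=
  if h : ∀ j, approvalWeight w r j = 0 then none
  else
    some ((Finset.univ.filter fun j => ∀ j', approvalWeight w r j' ≤ approvalWeight w r j).min'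
      (by
        obtain ⟨j0, -⟩ := not_forall.mp h
        obtain ⟨j, -, hj⟩ :=
          Finset.exists_max_image Finset.univ (approvalWeight w r) ⟨j0, Finset.mem_univ j0⟩
        exact ⟨j, Finset.mem_filter.mpr
          ⟨Finset.mem_univ j, fun j' => hj j' (Finset.mem_univ j')⟩⟩))

/-- Expected utility of expert `i` under profile `r`, beliefs `p`, external rewards `g`,
and reward parameters `a`, `a'`, `s`. -/
noncomputable def utility {n k : ℕ} (w : Fin n → ℝ) (p g : Fin n → Fin k → ℝ)
    (a a' s : ℝ) (r : Fin n → Fin k → Bool) (i : Fin n) : ℝ :=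
  match winner w r with
  | none => 0
  | some j => g i j * p i j + (if r i j then a * p i j - s * (1 - p i j) else a' * (1 - p i j))

/-- Estimated quality of proposal `j` with respect to threshold `T`. -/
noncomputable def qual {n k : ℕ} (w : Fin n → ℝ) (p : Fin n → Fin k → ℝ) (T : ℝ)
    (j : Fin k) : ℝ :=
  ∑ i, if T ≤ p i j then w i else 0

/-- The profile obtained from `r` by flipping the single vote of expert `i` on proposal `j`. -/
def flipVote {n k : ℕ} (r : Fin n → Fin k → Bool) (i : Fin n) (j : Fin k) :
    Fin n → Fin k → Bool :=
  Function.update r i (Function.update (r i) j (!(r i j)))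

/-- A profile is semi-strategically consistent if flipping any dishonest vote to its honest
value strictly decreases the deviating expert's utility. -/
def semiStrategicConsistent {n k : ℕ} (w : Fin n → ℝ) (p g : Fin n → Fin k → ℝ)
    (a a' s T : ℝ) (r : Fin n → Fin k → Bool) : Prop :=
  ∀ i j, ((r i j = true ∧ p i j < T) ∨ (r i j = false ∧ T ≤ p i j)) →
    utility w p g a a' s (flipVote r i j) i < utility w p g a a' s r i

/-! With expert 1 honest, proposal 1 wins by the extra weight `w₂` of expert 2, and since
`p₁₁ = T` expert 1 is exactly indifferent there between approving and disapproving, earning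
`a'·(1−T) = a'·a/(a'+s+a) < a`. Withdrawing her approval of proposal 1 leaves it with weight
`w₂ < 1`, so proposal 2, which she approves and believes good with certainty, wins and pays
her `a`. -/

noncomputable def threshold (a a' s : ℝ) : ℝ := (a' + s) / (a' + s + a)

section Threshold

variable {a a' s : ℝ}

theorem threshold_lt_one (ha : 0 < a) (ha' : 0 ≤ a') (hs : 0 ≤ s) : threshold a a' s < 1 := by
  rw [threshold, div_lt_one (by positivity)]
  linarith

theorem approve_payoff_eq_disapprove_payoff_at_threshold (h : a' + s + a ≠ 0) :
    a * threshold a a' s - s * (1 - threshold a a' s) = a' * (1 - threshold a a' s) := by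
  rw [threshold]
  field_simp
  ring

theorem disapprove_payoff_at_threshold_lt (ha : 0 < a) (ha' : 0 ≤ a') (hs : 0 ≤ s) :
    a' * (1 - threshold a a' s) < a := by
  have hD : 0 < a' + s + a := by positivity
  have h_one_sub : 1 - threshold a a' s = a / (a' + s + a) := by
    rw [threshold]
    field_simp
    ring
  rw [h_one_sub, mul_div_assoc', div_lt_iff₀ hD]
  nlinarith

end Threshold

section Winner

variable {n k : ℕ} {w : Fin n → ℝ} {r : Fin n → Fin k → Bool} {j : Fin k}

theorem winner_eq_some_of_isLeast_maximizer (h_ne : approvalWeight w r j ≠ 0)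
    (h_max : ∀ j', approvalWeight w r j' ≤ approvalWeight w r j)
    (h_lt : ∀ j' < j, approvalWeight w r j' < approvalWeight w r j) :
    winner w r = some j := by
  rw [winner, dif_neg fun h => h_ne (h j), Option.some_inj]
  refine le_antisymm (Finset.min'_le _ _ (by simpa using h_max)) (Finset.le_min' _ _ _ ?_)
  intro j' hj'
  by_contra! hlt
  exact (h_lt j' hlt).not_ge ((Finset.mem_filter.mp hj').2 j)

theorem utility_of_winner_of_approve {p g : Fin n → Fin k → ℝ} {a a' s : ℝ} {i : Fin n}
    (hwin : winner w r = some j) (happrove : r i j = true) :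
    utility w p g a a' s r i = g i j * p i j + (a * p i j - s * (1 - p i j)) := by
  simp only [utility, hwin, happrove, if_true]

end Winner

/-- Theorem 3.1 (second part): for any choice of parameters `a, a', s > 0` there is an
instance where an expert can strictly increase her payoff by switching her vote against the
honest winner.  Expert 1 has weight `1` and beliefs `p₁₁ = T`, `p₁₂ = 1`; expert 2 has weight
`w₂ ∈ (0,1)` and approves only proposal 1; all external rewards are zero.  With expert 1
honest (approving both proposals) the winner is proposal 1 and her utility is
`a·T − s·(1−T) = a'·(1−T)`; switching her vote on proposal 1 to disapproval makes proposal 2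
the winner and strictly increases her utility to `a`. -/
theorem stmt2 (a a' s : ℝ) (ha : 0 < a) (ha' : 0 < a') (hs : 0 < s)
    (T : ℝ) (hT : T = (a' + s) / (a' + s + a))
    (w2 : ℝ) (hw2 : w2 ∈ Set.Ioo (0:ℝ) 1)
    (p2 : Fin 2 → ℝ) :
    let w : Fin 2 → ℝ := ![1, w2]
    let p : Fin 2 → Fin 2 → ℝ := ![![T, 1], p2]
    let g : Fin 2 → Fin 2 → ℝ := fun _ _ => 0
    let r : Fin 2 → Fin 2 → Bool := ![![true, true], ![true, false]]
    let rdev : Fin 2 → Fin 2 → Bool := Function.update r 0 ![false, true]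
    (∀ j, r 0 j = true ↔ T ≤ p 0 j) ∧
    winner w r = some 0 ∧
    winner w rdev = some 1 ∧
    utility w p g a a' s r 0 = a * T - s * (1 - T) ∧
    utility w p g a a' s r 0 = a' * (1 - T) ∧
    utility w p g a a' s rdev 0 = a ∧
    utility w p g a a' s r 0 < utility w p g a a' s rdev 0 := by
  intro w p g r rdev
  obtain ⟨hw2_pos, hw2_lt⟩ := hw2
  replace hT : T = threshold a a' s := hT
  obtain ⟨hr_0, hr_1⟩ : approvalWeight w r 0 = 1 + w2 ∧ approvalWeight w r 1 = 1 := by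
    simp [approvalWeight, w, r]
  obtain ⟨hdev_0, hdev_1⟩ : approvalWeight w rdev 0 = w2 ∧ approvalWeight w rdev 1 = 1 := by
    simp [approvalWeight, w, rdev, r]
  have h_honest_win : winner w r = some 0 :=
    winner_eq_some_of_isLeast_maximizer (by linarith)
      (Fin.forall_fin_two.2 ⟨le_rfl, by linarith⟩) (fun j' h => absurd h (Fin.not_lt_zero j'))
  have h_dev_win : winner w rdev = some 1 :=
    winner_eq_some_of_isLeast_maximizer (by linarith)
      (Fin.forall_fin_two.2 ⟨by linarith, le_rfl⟩)
      (by simpa [Fin.forall_fin_two, hdev_0, hdev_1] using hw2_lt)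
  have h_honest_utility : utility w p g a a' s r 0 = a * T - s * (1 - T) := by
    simp [utility_of_winner_of_approve (i := 0) h_honest_win rfl, g, p]
  have h_dev_utility : utility w p g a a' s rdev 0 = a := by
    simp [utility_of_winner_of_approve (i := 0) h_dev_win rfl, g, p]
  have h_indiff : a * T - s * (1 - T) = a' * (1 - T) :=
    hT ▸ approve_payoff_eq_disapprove_payoff_at_threshold (by positivity)
  refine ⟨?_, h_honest_win, h_dev_win, h_honest_utility, h_honest_utility.trans h_indiff,
    h_dev_utility, ?_⟩
  · simpa [Fin.forall_fin_two, r, p, hT] using (threshold_lt_one ha ha'.le hs.le).le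
  · rw [h_honest_utility, h_indiff, h_dev_utility, hT]
    exact disapprove_payoff_at_threshold_lt ha ha'.le hs.le
end

section
/- The Price of Anarchy of M_AV over exact pure Nash equilibria is Ω(n), even when all external rewards are zero. Concretely: let a, a', s ≥ 0 with a' + s > 0 and a + a' + s > 0, and T = (a'+s)/(a'+s+a). For every integer n ≥ 1 and every ε > 0, consider the instance with n+1 experts and 2 proposals, all g_{ij} = 0, where expert 1 has w_1 = 1/n + ε, p_{11} = 1, p_{12} = 0, and each expert i ∈ {2, …, n+1} has w_i = 1/n, p_{i1} = 0, p_{i2} = 1. Then the voting profile in which expert 1 approves only proposal 1 and every other expert disapproves both proposals is a pure Nash equilibrium of M_AV; its winner is proposal 1, and Qual[1] = 1/n + ε while Qual[2] = 1. -/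
open Finset

/-! Expert `0` outweighs each other expert, so while the others abstain no unilateral deviation
of one of them moves the winner away from proposal `0`, which she believes bad: rejecting it earns
`a'`, approving it `-s`. Expert `0` already collects her best payoff `a`. -/

section Mechanism

variable {n k : ℕ} (w : Fin n → ℝ) (r : Fin n → Fin k → Bool)

theorem winner_eq_none (h : ∀ j, approvalWeight w r j = 0) : winner w r = none := by
  unfold winner
  rw [dif_pos h]

theorem winner_eq_some (j : Fin k) (hne : ¬∀ j', approvalWeight w r j' = 0)
    (hmax : ∀ j', approvalWeight w r j' ≤ approvalWeight w r j)
    (hfirst : ∀ j' < j, approvalWeight w r j' < approvalWeight w r j) :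
    winner w r = some j := by
  unfold winner
  rw [dif_neg hne, Option.some_inj]
  refine le_antisymm (Finset.min'_le _ _ (by simpa using hmax)) (Finset.le_min' _ _ _ ?_)
  intro j' hj'
  by_contra! hlt
  exact (hfirst j' hlt).not_ge ((Finset.mem_filter.mp hj').2 j)

theorem winner_eq_some_zero {n : ℕ} (w : Fin n → ℝ) (r : Fin n → Fin 2 → Bool)
    (h0 : approvalWeight w r 0 ≠ 0) (h1 : approvalWeight w r 1 ≤ approvalWeight w r 0) :
    winner w r = some 0 :=
  winner_eq_some w r 0 (fun h => h0 (h 0)) (fun j => by fin_cases j <;> simp [h1])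
    (fun j hj => absurd hj (Fin.not_lt_zero j))

theorem winner_eq_some_one {n : ℕ} (w : Fin n → ℝ) (r : Fin n → Fin 2 → Bool)
    (h : approvalWeight w r 0 < approvalWeight w r 1) :
    winner w r = some 1 :=
  winner_eq_some w r 1 (fun h' => h.ne (by rw [h' 0, h' 1]))
    (fun j => by fin_cases j <;> simp [h.le]) (fun j hj => by
      obtain rfl : j = 0 := by omega
      exact h)

theorem approvalWeight_eq_of_forall_ne (i : Fin n) (j : Fin k) (h : ∀ i' ≠ i, r i' j = false) :
    approvalWeight w r j = if r i j then w i else 0 :=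
  Finset.sum_eq_single i (fun i' _ hi' => by simp [h i' hi']) (by simp)

theorem le_approvalWeight (hw : ∀ i, 0 ≤ w i) {i : Fin n} {j : Fin k} (h : r i j = true) :
    w i ≤ approvalWeight w r j := by
  unfold approvalWeight
  simpa [h] using Finset.single_le_sum (f := fun i' => if r i' j then w i' else 0)
    (fun i' _ => by split_ifs <;> simp [hw i']) (Finset.mem_univ i)

variable (p g : Fin n → Fin k → ℝ) (a a' s : ℝ)

theorem utility_of_winner_eq_none (h : winner w r = none) (i : Fin n) :
    utility w p g a a' s r i = 0 := by
  simp [utility, h]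

theorem utility_of_winner_eq_some {j : Fin k} (h : winner w r = some j) (i : Fin n) :
    utility w p g a a' s r i = g i j * p i j +
      if r i j then a * p i j - s * (1 - p i j) else a' * (1 - p i j) := by
  simp [utility, h]

end Mechanism

theorem threshold_pos_and_le_one {a a' s : ℝ} (ha : 0 ≤ a) (hpos : 0 < a' + s) :
    0 < (a' + s) / (a' + s + a) ∧ (a' + s) / (a' + s + a) ≤ 1 :=
  ⟨by positivity, div_le_one_of_le₀ (by linarith) (by positivity)⟩

section PriceOfAnarchyInstance

variable (n : ℕ) (ε : ℝ)

noncomputable def poaWeight : Fin (n+1) → ℝ :=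
  fun i => if i = 0 then 1/(n:ℝ) + ε else 1/(n:ℝ)

def poaBelief : Fin (n+1) → Fin 2 → ℝ := fun i => if i = 0 then ![1, 0] else ![0, 1]

def poaProfile : Fin (n+1) → Fin 2 → Bool :=
  fun i => if i = 0 then ![true, false] else ![false, false]

variable {n ε}

@[simp] theorem poaWeight_zero : poaWeight n ε 0 = 1/(n:ℝ) + ε := by simp [poaWeight]

@[simp] theorem poaWeight_of_ne_zero {i : Fin (n+1)} (hi : i ≠ 0) :
    poaWeight n ε i = 1/(n:ℝ) := by
  simp [poaWeight, hi]

theorem poaWeight_nonneg (hε : 0 ≤ ε) (i : Fin (n+1)) : 0 ≤ poaWeight n ε i := by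
  unfold poaWeight; split_ifs <;> positivity

@[simp] theorem poaBelief_zero : poaBelief n 0 = ![1, 0] := by simp [poaBelief]

@[simp] theorem poaBelief_of_ne_zero {i : Fin (n+1)} (hi : i ≠ 0) : poaBelief n i = ![0, 1] := by
  simp [poaBelief, hi]

@[simp] theorem poaProfile_zero : poaProfile n 0 = ![true, false] := by simp [poaProfile]

@[simp] theorem poaProfile_of_ne_zero {i : Fin (n+1)} (hi : i ≠ 0) :
    poaProfile n i = ![false, false] := by
  simp [poaProfile, hi]

theorem approvalWeight_update_poaProfile_zero (w : Fin (n+1) → ℝ) (v : Fin 2 → Bool)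
    (j : Fin 2) :
    approvalWeight w (Function.update (poaProfile n) 0 v) j = if v j then w 0 else 0 := by
  rw [approvalWeight_eq_of_forall_ne _ _ 0 j fun i hi => by fin_cases j <;> simp [hi]]
  simp

theorem winner_update_poaProfile_zero (hε : 0 < ε) {v : Fin 2 → Bool} (hv : v 0 = true) :
    winner (poaWeight n ε) (Function.update (poaProfile n) 0 v) = some 0 := by
  have hw : 0 < poaWeight n ε 0 := by rw [poaWeight_zero]; positivity
  apply winner_eq_some_zero <;> simp only [approvalWeight_update_poaProfile_zero, hv, if_true]
  · exact hw.ne'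
  · split_ifs <;> linarith

theorem winner_poaProfile (hε : 0 < ε) : winner (poaWeight n ε) (poaProfile n) = some 0 := by
  simpa only [Function.update_eq_self] using
    winner_update_poaProfile_zero (n := n) hε (v := poaProfile n 0) (by simp)

variable {a a' s : ℝ}

theorem utility_poaProfile_zero (hε : 0 < ε) :
    utility (poaWeight n ε) (poaBelief n) (fun _ _ => 0) a a' s (poaProfile n) 0 = a := by
  simp [utility_of_winner_eq_some _ _ _ _ _ _ _ (winner_poaProfile hε)]

theorem utility_poaProfile_of_ne_zero (hε : 0 < ε) {i : Fin (n+1)} (hi : i ≠ 0) :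
    utility (poaWeight n ε) (poaBelief n) (fun _ _ => 0) a a' s (poaProfile n) i = a' := by
  simp [utility_of_winner_eq_some _ _ _ _ _ _ _ (winner_poaProfile hε), hi]

theorem utility_update_poaProfile_zero_le (ha : 0 ≤ a) (hs : 0 ≤ s) (hε : 0 < ε)
    (v : Fin 2 → Bool) :
    utility (poaWeight n ε) (poaBelief n) (fun _ _ => 0) a a' s
      (Function.update (poaProfile n) 0 v) 0 ≤
    utility (poaWeight n ε) (poaBelief n) (fun _ _ => 0) a a' s (poaProfile n) 0 := by
  have hw : 0 < poaWeight n ε 0 := by rw [poaWeight_zero]; positivity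
  rw [utility_poaProfile_zero hε]
  cases h0 : v 0
  · cases h1 : v 1
    · have hnone :=
        winner_eq_none (poaWeight n ε) (Function.update (poaProfile n) 0 v) fun j => by
          fin_cases j <;> simp [approvalWeight_update_poaProfile_zero, h0, h1]
      rw [utility_of_winner_eq_none _ _ _ _ _ _ _ hnone]
      exact ha
    · have hone := winner_eq_some_one (poaWeight n ε) (Function.update (poaProfile n) 0 v)
        (by
          simp only [approvalWeight_update_poaProfile_zero, h0, h1, Bool.false_eq_true, if_false,
            if_true]
          exact hw)
      simp [utility_of_winner_eq_some _ _ _ _ _ _ _ hone, h1]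
      linarith
  · simp [utility_of_winner_eq_some _ _ _ _ _ _ _ (winner_update_poaProfile_zero hε h0), h0]

theorem utility_update_poaProfile_of_ne_zero_le (hsa' : 0 ≤ a' + s) (hε : 0 < ε)
    {i : Fin (n+1)} (hi : i ≠ 0) (v : Fin 2 → Bool) :
    utility (poaWeight n ε) (poaBelief n) (fun _ _ => 0) a a' s
      (Function.update (poaProfile n) i v) i ≤
    utility (poaWeight n ε) (poaBelief n) (fun _ _ => 0) a a' s (poaProfile n) i := by
  have h0 :
      poaWeight n ε 0 ≤ approvalWeight (poaWeight n ε) (Function.update (poaProfile n) i v) 0 :=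
    le_approvalWeight _ _ (poaWeight_nonneg hε.le) (by simp [Function.update_of_ne hi.symm])
  have h1 : approvalWeight (poaWeight n ε) (Function.update (poaProfile n) i v) 1 =
      if v 1 then 1/(n:ℝ) else 0 := by
    rw [approvalWeight_eq_of_forall_ne _ _ i 1 fun i' hi' => by
      rw [Function.update_of_ne hi']
      by_cases hi'0 : i' = 0 <;> simp [hi'0]]
    simp [hi]
  have hwin : winner (poaWeight n ε) (Function.update (poaProfile n) i v) = some 0 := by
    have : (0 : ℝ) ≤ 1/(n:ℝ) := by positivity
    rw [poaWeight_zero] at h0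
    apply winner_eq_some_zero
    · linarith
    · rw [h1]; split_ifs <;> linarith
  rw [utility_poaProfile_of_ne_zero hε hi, utility_of_winner_eq_some _ _ _ _ _ _ _ hwin]
  simp [hi]
  split_ifs <;> linarith

theorem poaProfile_isNash (ha : 0 ≤ a) (hs : 0 ≤ s) (hsa' : 0 ≤ a' + s) (hε : 0 < ε)
    (i : Fin (n+1)) (v : Fin 2 → Bool) :
    utility (poaWeight n ε) (poaBelief n) (fun _ _ => 0) a a' s
      (Function.update (poaProfile n) i v) i ≤
    utility (poaWeight n ε) (poaBelief n) (fun _ _ => 0) a a' s (poaProfile n) i := by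
  rcases eq_or_ne i 0 with rfl | hi
  · exact utility_update_poaProfile_zero_le ha hs hε v
  · exact utility_update_poaProfile_of_ne_zero_le hsa' hε hi v

variable {T : ℝ}

theorem qual_poa_zero (hT0 : 0 < T) (hT1 : T ≤ 1) :
    qual (poaWeight n ε) (poaBelief n) T 0 = 1/(n:ℝ) + ε := by
  unfold qual
  rw [Finset.sum_eq_single 0 (fun i _ hi => by simp [hi, hT0.not_ge]) (by simp)]
  simp [hT1]

theorem qual_poa_one (hn : 1 ≤ n) (hT0 : 0 < T) (hT1 : T ≤ 1) :
    qual (poaWeight n ε) (poaBelief n) T 1 = 1 := by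
  unfold qual
  rw [Fin.sum_univ_succ]
  have : (n : ℝ) ≠ 0 := by positivity
  simp [Fin.succ_ne_zero, hT0.not_ge, hT1]
  field_simp

end PriceOfAnarchyInstance

theorem stmt5_general (a a' s : ℝ) (ha : 0 ≤ a) (hs : 0 ≤ s)
    (hpos : 0 < a' + s)
    (T : ℝ) (hT : T = (a' + s) / (a' + s + a))
    (n : ℕ) (hn : 1 ≤ n) (ε : ℝ) (hε : 0 < ε) :
    let w : Fin (n+1) → ℝ := fun i => if i = 0 then 1/(n:ℝ) + ε else 1/(n:ℝ)
    let p : Fin (n+1) → Fin 2 → ℝ := fun i => if i = 0 then ![1, 0] else ![0, 1]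
    let g : Fin (n+1) → Fin 2 → ℝ := fun _ _ => 0
    let r : Fin (n+1) → Fin 2 → Bool :=
      fun i => if i = 0 then ![true, false] else ![false, false]
    (∀ i (r' : Fin 2 → Bool),
      utility w p g a a' s (Function.update r i r') i ≤ utility w p g a a' s r i) ∧
    winner w r = some 0 ∧
    qual w p T 0 = 1/(n:ℝ) + ε ∧
    qual w p T 1 = 1 := by
  obtain ⟨hT0, hT1⟩ := hT ▸ threshold_pos_and_le_one ha hpos
  exact ⟨poaProfile_isNash ha hs hpos.le hε, winner_poaProfile hε, qual_poa_zero hT0 hT1,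
    qual_poa_one hn hT0 hT1⟩

/-- Proposition 3.3: the Price of Anarchy of `M_AV` is `Ω(n)`, even with all external rewards
zero.  In the instance with `n+1` experts and 2 proposals where expert 1 has weight `1/n + ε`
and beliefs `(1, 0)` and every other expert has weight `1/n` and beliefs `(0, 1)`, the profile
in which expert 1 approves only proposal 1 and everyone else disapproves both proposals is a
pure Nash equilibrium; its winner is proposal 1, of quality `1/n + ε`, while proposal 2 has
quality `1`. -/
theorem stmt5 (a a' s : ℝ) (ha : 0 ≤ a) (ha' : 0 ≤ a') (hs : 0 ≤ s)
    (hpos : 0 < a' + s) (hsum : 0 < a + a' + s)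
    (T : ℝ) (hT : T = (a' + s) / (a' + s + a))
    (n : ℕ) (hn : 1 ≤ n) (ε : ℝ) (hε : 0 < ε) :
    let w : Fin (n+1) → ℝ := fun i => if i = 0 then 1/(n:ℝ) + ε else 1/(n:ℝ)
    let p : Fin (n+1) → Fin 2 → ℝ := fun i => if i = 0 then ![1, 0] else ![0, 1]
    let g : Fin (n+1) → Fin 2 → ℝ := fun _ _ => 0
    let r : Fin (n+1) → Fin 2 → Bool :=
      fun i => if i = 0 then ![true, false] else ![false, false]
    (∀ i (r' : Fin 2 → Bool),
      utility w p g a a' s (Function.update r i r') i ≤ utility w p g a a' s r i) ∧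
    winner w r = some 0 ∧
    qual w p T 0 = 1/(n:ℝ) + ε ∧
    qual w p T 1 = 1 :=
  stmt5_general a a' s ha hs hpos T hT n hn ε hε
end

section
/- Let ζ ∈ (0,1), ε ∈ (0,1], δ ≥ 0, and c, w > 0. There exists γ₀ ∈ (0,1) such that for every discount factor γ ∈ (0, γ₀) the following holds: for all sequences R_h, R_d : ℕ → ℝ with R_h summable and satisfying, for every t ≥ 0, R_h(t) ≥ w·c·((1−ζ)·γ)^t and 0 ≤ R_d(t) ≤ (1+δ)·(1+ε)·w·c·((1+ζ)·γ)^t, the series Σ_{t=0}^∞ R_d(t) converges and Σ_{t=0}^∞ R_d(t) ≤ (1+δ)·(1+3ε)·Σ_{t=0}^∞ R_h(t). -/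
/-- Core estimate of Theorem 4.1: for `ζ ∈ (0,1)`, `ε ∈ (0,1]`, `δ ≥ 0` and `c, w > 0`,
there is a threshold `γ₀ ∈ (0,1)` such that for every discount factor `γ ∈ (0, γ₀)`, any
summable stream of honest rewards with `R_h(t) ≥ w·c·((1−ζ)·γ)^t` and any stream of deviating
rewards with `0 ≤ R_d(t) ≤ (1+δ)·(1+ε)·w·c·((1+ζ)·γ)^t` satisfy: the deviating stream is
summable and its total is at most `(1+δ)·(1+3ε)` times the honest total. -/
theorem stmt13 (ζ ε δ c w : ℝ) (hζ : ζ ∈ Set.Ioo (0:ℝ) 1) (hε : ε ∈ Set.Ioc (0:ℝ) 1)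
    (hδ : 0 ≤ δ) (hc : 0 < c) (hw : 0 < w) :
    ∃ γ₀ ∈ Set.Ioo (0:ℝ) 1, ∀ γ ∈ Set.Ioo (0:ℝ) γ₀,
      ∀ Rh Rd : ℕ → ℝ, Summable Rh →
        (∀ t, w * c * ((1 - ζ) * γ) ^ t ≤ Rh t) →
        (∀ t, 0 ≤ Rd t ∧ Rd t ≤ (1 + δ) * (1 + ε) * w * c * ((1 + ζ) * γ) ^ t) →
        Summable Rd ∧ ∑' t, Rd t ≤ (1 + δ) * (1 + 3 * ε) * ∑' t, Rh t := by
  obtain ⟨hζ0, hζ1⟩ := hζ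
  obtain ⟨hε0, hε1⟩ := hε
  have hden : 0 < (1 + 3 * ε) * (1 + ζ) := by nlinarith
  refine ⟨2 * ε / ((1 + 3 * ε) * (1 + ζ)), ⟨by positivity, by
    rw [div_lt_one hden]; nlinarith⟩, ?_⟩
  rintro γ ⟨hγ0, hγ2⟩ Rh Rd hRh hh hd
  have hγlt : γ * ((1 + 3 * ε) * (1 + ζ)) < 2 * ε := by
    have := (lt_div_iff₀ hden).mp hγ2
    linarith
  set r : ℝ := (1 + ζ) * γ with hr
  set r' : ℝ := (1 - ζ) * γ with hr'
  have hr0 : 0 ≤ r := by positivity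
  have hr1 : r < 1 := by nlinarith
  have hr'0 : 0 ≤ r' := by nlinarith
  have hr'1 : r' < 1 := by nlinarith
  set C : ℝ := (1 + δ) * (1 + ε) * w * c with hC
  have hC0 : 0 < C := by positivity
  have hgeo : Summable (fun t : ℕ => C * r ^ t) :=
    (summable_geometric_of_lt_one hr0 hr1).mul_left C
  have hsumd : Summable Rd :=
    hgeo.of_nonneg_of_le (fun t => (hd t).1) (fun t => (hd t).2)
  refine ⟨hsumd, ?_⟩
  have h1 : ∑' t, Rd t ≤ C * (1 - r)⁻¹ := by
    calc ∑' t, Rd t ≤ ∑' t, C * r ^ t := Summable.tsum_le_tsum (fun t => (hd t).2) hsumd hgeo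
    _ = C * (1 - r)⁻¹ := by
        rw [tsum_mul_left, tsum_geometric_of_lt_one hr0 hr1]
  have h2 : w * c * (1 - r')⁻¹ ≤ ∑' t, Rh t := by
    have := Summable.tsum_le_tsum hh
      (((summable_geometric_of_lt_one hr'0 hr'1).mul_left (w * c))) hRh
    rwa [tsum_mul_left, tsum_geometric_of_lt_one hr'0 hr'1] at this
  have hkey : C * (1 - r)⁻¹ ≤ (1 + δ) * (1 + 3 * ε) * (w * c * (1 - r')⁻¹) := by
    have h1r : 0 < 1 - r := by linarith
    have h1r' : 0 < 1 - r' := by linarith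
    have hfrac : (1 + ε) / (1 - r) ≤ (1 + 3 * ε) / (1 - r') := by
      rw [div_le_div_iff₀ h1r h1r', hr, hr']; nlinarith
    have hmul := mul_le_mul_of_nonneg_left hfrac
      (by positivity : (0:ℝ) ≤ (1 + δ) * w * c)
    calc C * (1 - r)⁻¹ = (1 + δ) * w * c * ((1 + ε) / (1 - r)) := by
          rw [hC, div_eq_mul_inv]; ring
      _ ≤ (1 + δ) * w * c * ((1 + 3 * ε) / (1 - r')) := hmul
      _ = (1 + δ) * (1 + 3 * ε) * (w * c * (1 - r')⁻¹) := by
          rw [div_eq_mul_inv]; ring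
  calc ∑' t, Rd t ≤ C * (1 - r)⁻¹ := h1
    _ ≤ (1 + δ) * (1 + 3 * ε) * (w * c * (1 - r')⁻¹) := hkey
    _ ≤ (1 + δ) * (1 + 3 * ε) * ∑' t, Rh t := by
        apply mul_le_mul_of_nonneg_left h2; positivity
end

section
/- Let ζ ∈ (0,1), let (ω_t)_{t≥1} be a sequence with ω_t ∈ [0,1] for all t and lim_{t→∞} ω_t = π for some π ∈ [0,1], and set w_0 = 1/2. Define the delayed-update sequence (w_t)_{t≥0} by: w_{t+1} = min{ω_{t+1}, (1+ζ)·w_t} if w_t ≤ ω_{t+1}, and w_{t+1} = max{ω_{t+1}, (1−ζ)·w_t} if w_t > ω_{t+1}. Then lim_{t→∞} w_t = π. -/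
/-- Convergence of the delayed weights: if the fractions of correct predictions
`ω_t ∈ [0,1]` converge to the inherent expertise level `π ∈ [0,1]`, then the delayed-update
weights starting at `w_0 = 1/2`, defined by `w_{t+1} = min(ω_{t+1}, (1+ζ)·w_t)` when
`w_t ≤ ω_{t+1}` and `w_{t+1} = max(ω_{t+1}, (1−ζ)·w_t)` otherwise, also converge to `π`. -/
theorem stmt15 (ζ : ℝ) (hζ : ζ ∈ Set.Ioo (0:ℝ) 1) (ω : ℕ → ℝ)
    (hω : ∀ t, 1 ≤ t → ω t ∈ Set.Icc (0:ℝ) 1)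
    (π : ℝ) (hπ : π ∈ Set.Icc (0:ℝ) 1)
    (hlim : Filter.Tendsto ω Filter.atTop (nhds π))
    (w : ℕ → ℝ) (hwinit : w 0 = 1 / 2)
    (hrec : ∀ t, w (t + 1) =
      if w t ≤ ω (t + 1) then min (ω (t + 1)) ((1 + ζ) * w t)
      else max (ω (t + 1)) ((1 - ζ) * w t)) :
    Filter.Tendsto w Filter.atTop (nhds π) := by
  obtain ⟨hζ0, hζ1⟩ := hζ
  obtain ⟨hπ0, hπ1⟩ := hπ
  have wpos : ∀ t, 0 < w t := by
    intro t; induction t with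
    | zero => rw [hwinit]; norm_num
    | succ t ih =>
      rw [hrec t]
      split_ifs with h
      · exact lt_min (lt_of_lt_of_le ih h) (by nlinarith)
      · exact lt_max_of_lt_right (by nlinarith)
  have wle1 : ∀ t, w t ≤ 1 := by
    intro t; induction t with
    | zero => rw [hwinit]; norm_num
    | succ t ih =>
      rw [hrec t]
      split_ifs with h
      · exact le_trans (min_le_left _ _) (hω (t+1) (by omega)).2
      · exact max_le (hω (t+1) (by omega)).2 (by nlinarith [wpos t])
  have between_lo : ∀ t, min (w t) (ω (t+1)) ≤ w (t+1) := by
    intro t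
    rw [hrec t]
    split_ifs with h
    · exact le_trans (min_le_left _ _) (le_min h (by nlinarith [wpos t]))
    · exact le_trans (min_le_right _ _) (le_max_left _ _)
  have between_hi : ∀ t, w (t+1) ≤ max (w t) (ω (t+1)) := by
    intro t
    rw [hrec t]
    split_ifs with h
    · exact le_trans (min_le_left _ _) (le_max_right _ _)
    · exact max_le (le_max_right _ _) (le_trans (by nlinarith [wpos t]) (le_max_left (w t) _))
  rw [Metric.tendsto_atTop] at hlim ⊢
  intro ε hε
  obtain ⟨N0, hN0⟩ := hlim (ε/2) (by linarith)
  set N := max N0 1 with hN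
  have hωb : ∀ t, N ≤ t → |ω t - π| < ε/2 := by
    intro t ht
    have := hN0 t (le_trans (le_max_left _ _) ht)
    rwa [Real.dist_eq] at this
  -- invariance of the ε-ball
  have inv : ∀ t, N ≤ t → |w t - π| < ε → |w (t+1) - π| < ε := by
    intro t ht hwt
    have hω' := hωb (t+1) (le_trans ht (Nat.le_succ t))
    rw [abs_sub_lt_iff] at hwt hω' ⊢
    constructor
    · have h1 : max (w t) (ω (t+1)) < π + ε :=
        max_lt (by linarith [hwt.1]) (by linarith [hω'.1])
      linarith [between_hi t]
    · have h1 : π - ε < min (w t) (ω (t+1)) :=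
        lt_min (by linarith [hwt.2]) (by linarith [hω'.2])
      linarith [between_lo t]
  -- the weights eventually enter the ε-ball
  have hex : ∃ T, N ≤ T ∧ |w T - π| < ε := by
    by_contra hcon
    push_neg at hcon
    rcases le_or_gt (π + ε) (w N) with hhi | hlo
    · -- stays above and decays geometrically
      have key : ∀ k, π + ε ≤ w (N + k) ∧ w (N + k) ≤ (1-ζ)^k * w N := by
        intro k; induction k with
        | zero => simpa using hhi
        | succ k ih =>
          obtain ⟨ih1, ih2⟩ := ih
          have hω' := abs_sub_lt_iff.mp (hωb (N + k + 1) (by omega))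
          have hgt : ¬ w (N+k) ≤ ω (N+k+1) := by push_neg; linarith [hω'.1]
          have hrec' := hrec (N + k)
          rw [if_neg hgt] at hrec'
          have hlow : π - ε < w (N + k + 1) := by
            rw [hrec']
            calc π - ε < ω (N+k+1) := by linarith [hω'.2]
            _ ≤ _ := le_max_left _ _
          have hnot := hcon (N + k + 1) (by omega)
          have hge : π + ε ≤ w (N + k + 1) := by
            rcases le_or_gt (π + ε) (w (N+k+1)) with h | h
            · exact h
            · exfalso
              have : |w (N+k+1) - π| < ε := abs_sub_lt_iff.mpr ⟨by linarith, by linarith⟩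
              linarith
          refine ⟨hge, ?_⟩
          have heq : w (N+k+1) = (1-ζ) * w (N+k) := by
            rw [hrec']
            rcases max_choice (ω (N+k+1)) ((1-ζ) * w (N+k)) with h | h
            · exfalso; rw [hrec', h] at hge; linarith [hω'.1]
            · exact h
          show w (N + k + 1) ≤ (1-ζ)^(k+1) * w N
          rw [heq, pow_succ]
          nlinarith [pow_nonneg (by linarith : (0:ℝ) ≤ 1 - ζ) k, wpos (N+k)]
      obtain ⟨k, hk⟩ := exists_pow_lt_of_lt_one hε (by linarith : (1:ℝ) - ζ < 1)
      have h1 := (key k).1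
      have h2 := (key k).2
      nlinarith [pow_nonneg (by linarith : (0:ℝ) ≤ 1 - ζ) k, wle1 N, wpos N]
    · -- stays below and grows geometrically
      have hhi' : w N ≤ π - ε := by
        have := hcon N le_rfl
        rcases le_or_gt (w N) (π - ε) with h | h
        · exact h
        · exfalso
          have : |w N - π| < ε := abs_sub_lt_iff.mpr ⟨by linarith, by linarith⟩
          linarith
      have key : ∀ k, w (N + k) ≤ π - ε ∧ (1+ζ)^k * w N ≤ w (N + k) := by
        intro k; induction k with
        | zero => simpa using hhi'
        | succ k ih =>
          obtain ⟨ih1, ih2⟩ := ih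
          have hω' := abs_sub_lt_iff.mp (hωb (N + k + 1) (by omega))
          have hle : w (N+k) ≤ ω (N+k+1) := by linarith [hω'.2]
          have hrec' := hrec (N + k)
          rw [if_pos hle] at hrec'
          have hup : w (N + k + 1) < π + ε := by
            rw [hrec']
            calc min (ω (N+k+1)) ((1+ζ) * w (N+k)) ≤ ω (N+k+1) := min_le_left _ _
            _ < π + ε := by linarith [hω'.1]
          have hnot := hcon (N + k + 1) (by omega)
          have hge : w (N + k + 1) ≤ π - ε := by
            rcases le_or_gt (w (N+k+1)) (π - ε) with h | h
            · exact h
            · exfalso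
              have : |w (N+k+1) - π| < ε := abs_sub_lt_iff.mpr ⟨by linarith, by linarith⟩
              linarith
          refine ⟨hge, ?_⟩
          have heq : w (N+k+1) = (1+ζ) * w (N+k) := by
            rw [hrec']
            rcases min_choice (ω (N+k+1)) ((1+ζ) * w (N+k)) with h | h
            · exfalso; rw [hrec', h] at hge; linarith [hω'.2]
            · exact h
          show (1+ζ)^(k+1) * w N ≤ w (N + k + 1)
          rw [heq, pow_succ]
          nlinarith [pow_nonneg (by linarith : (0:ℝ) ≤ 1 + ζ) k, wpos N]
      obtain ⟨k, hk⟩ := pow_unbounded_of_one_lt (1 / w N) (by linarith : (1:ℝ) < 1 + ζ)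
      have h1 := (key k).1
      have h2 := (key k).2
      have hwN := wpos N
      have : 1 < (1+ζ)^k * w N := by
        rw [div_lt_iff₀ hwN] at hk
        nlinarith
      linarith [wle1 (N + k)]
  obtain ⟨T, hT, hwT⟩ := hex
  refine ⟨T, fun n hn => ?_⟩
  rw [Real.dist_eq]
  obtain ⟨k, rfl⟩ := Nat.exists_eq_add_of_le hn
  induction k with
  | zero => simpa using hwT
  | succ k ih =>
    exact inv (T + k) (by omega) (ih (by omega))
end
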